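/- Let X1 and X2 be independent nonnegative random variables, each taking values in the set {(1+δ)^r : r ∈ ℤ_{≥0}} of integer powers of (1+δ), and let X = Round_δ(X1 + X2), where the rounding is performed conditionally on the value of X1 + X2 and independently of everything else. Then E[X] = E[X1] + E[X2] and Var(X) ≤ Var(X1) + Var(X2) + δ·E[X1]·E[X2]. -/

import Mathlib

open MeasureTheory ProbabilityTheory
open scoped ENNReal

/-- `⌊log_{1+δ} y⌋` as a natural number (for `y ≥ 1` the logarithm is nonnegative). -/
noncomputable def rExp (δ y : ℝ) : ℕ := ⌊Real.logb (1 + δ) y⌋₊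

/-- `⌊y⌋_δ = (1+δ)^{⌊log_{1+δ} y⌋}`. -/
noncomputable def rfloor (δ y : ℝ) : ℝ := (1 + δ) ^ rExp δ y

/-- `⌈y⌉_δ = (1+δ)^{⌈log_{1+δ} y⌉}`. -/
noncomputable def rceil (δ y : ℝ) : ℝ := (1 + δ) ^ (⌈Real.logb (1 + δ) y⌉₊)

/-- The probability `k / (δ(1+δ)^r)` (where `y = (1+δ)^r + k`) that the randomized
rounding rounds up. -/
noncomputable def roundUpProb (δ y : ℝ) : ℝ≥0∞ :=
  ENNReal.ofReal ((y - rfloor δ y) / (δ * rfloor δ y))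

/-- The randomized rounding `Round_δ(y)`: equal to `(1+δ)^r` with probability
`(δ(1+δ)^r − k)/(δ(1+δ)^r)` and to `(1+δ)^{r+1}` with probability `k/(δ(1+δ)^r)`,
where `y = (1+δ)^r + k`, `r = ⌊log_{1+δ} y⌋` and `k ∈ [0, δ(1+δ)^r)`.
(For `δ > 0` and `y ≥ 1` the probability `k/(δ(1+δ)^r)` lies in `[0,1)`, so the
clamping `min · 1` below is vacuous.) -/
noncomputable def roundPMF (δ y : ℝ) : PMF ℝ :=
  (PMF.bernoulli (min (roundUpProb δ y).toNNReal 1) (min_le_right _ _)).map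
    (fun b => if b then (1 + δ) ^ (rExp δ y + 1) else rfloor δ y)

/-- Expectation of a real-valued probability mass function. -/
noncomputable def pmfExp (p : PMF ℝ) : ℝ := ∫ x, x ∂p.toMeasure

/-- Variance of a real-valued probability mass function. -/
noncomputable def pmfVar (p : PMF ℝ) : ℝ := variance (fun x => x) p.toMeasure

/-!
Given `X1 = a` and `X2 = b`, the rounding moves `y = a + b` to one of its neighbouring powers
`L ≤ y < (1+δ)L` with the probabilities that keep the mean equal to `y`; its variance is then
`(y - L)((1+δ)L - y)`. Averaging over the independent pair gives `E[X] = E[X1] + E[X2]` at once,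
and the variance bound reduces, through `E[X1 X2] = E[X1] E[X2]`, to the pointwise inequality
`(y - L)((1+δ)L - y) ≤ δab`. For `a ≤ b` powers of `1+δ`, either `L = b`, where the left side is
`a(δb - a)`, or `L ≥ (1+δ)b`, which forces `a ≥ δb`, and AM-GM bounds the left side by
`(δL)²/4 ≤ δ²b² ≤ δab`.
-/

namespace PMF

variable {α β : Type*}

theorem support_bind_finite {p : PMF α} {g : α → PMF β} (hp : p.support.Finite)
    (hg : ∀ a ∈ p.support, (g a).support.Finite) : (p.bind g).support.Finite := by
  rw [support_bind]
  exact hp.biUnion hg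

theorem support_map_finite [Finite α] (f : α → β) (p : PMF α) :
    (p.map f).support.Finite := by
  rw [support_map]
  exact (Set.toFinite _).image f

variable [MeasurableSpace α] [MeasurableSingletonClass α] [MeasurableSpace β]
  [MeasurableSingletonClass β]

theorem integrable_of_support_finite {p : PMF α} (hp : p.support.Finite) (f : α → ℝ) :
    Integrable f p.toMeasure := by
  rw [← p.restrict_toMeasure_support, ← IntegrableOn, ← Set.biUnion_of_singleton p.support]
  exact (integrableOn_finite_biUnion hp).2 fun x _ => integrableOn_singleton

theorem integral_eq_sum_of_support_subset {p : PMF α} {s : Finset α} (hs : p.support ⊆ s)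
    (f : α → ℝ) : ∫ x, f x ∂p.toMeasure = ∑ x ∈ s, (p x).toReal * f x := by
  rw [p.integral_eq_tsum f (integrable_of_support_finite (s.finite_toSet.subset hs) f)]
  exact tsum_eq_sum fun x hx => by
    simp [(p.apply_eq_zero_iff x).2 fun h => hx (hs h)]

theorem integral_congr_support {p : PMF α} {f g : α → ℝ} (h : Set.EqOn f g p.support) :
    ∫ x, f x ∂p.toMeasure = ∫ x, g x ∂p.toMeasure := by
  rw [← p.restrict_toMeasure_support]
  exact setIntegral_congr_fun p.support_countable.measurableSet h

theorem integral_mono_support {p : PMF α} (hp : p.support.Finite) {f g : α → ℝ}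
    (h : ∀ x ∈ p.support, f x ≤ g x) :
    ∫ x, f x ∂p.toMeasure ≤ ∫ x, g x ∂p.toMeasure := by
  rw [← p.restrict_toMeasure_support]
  exact setIntegral_mono_on (integrable_of_support_finite hp f).integrableOn
    (integrable_of_support_finite hp g).integrableOn p.support_countable.measurableSet h

theorem integral_bind {p : PMF α} {g : α → PMF β} (hp : p.support.Finite)
    (hg : ∀ a ∈ p.support, (g a).support.Finite) (f : β → ℝ) :
    ∫ x, f x ∂(p.bind g).toMeasure = ∫ a, ∫ x, f x ∂(g a).toMeasure ∂p.toMeasure := by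
  set s := hp.toFinset
  set t := (support_bind_finite hp hg).toFinset
  have hgt : ∀ a ∈ s, (g a).support ⊆ t := fun a ha x hx => by
    rw [Finset.mem_coe, Set.Finite.mem_toFinset, mem_support_bind_iff]
    exact ⟨a, by simpa [s] using ha, hx⟩
  rw [integral_eq_sum_of_support_subset (p := p.bind g) (s := t) (by simp [t]),
    integral_eq_sum_of_support_subset (p := p) (s := s) (by simp [s])]
  calc ∑ x ∈ t, ((p.bind g) x).toReal * f x
      = ∑ x ∈ t, ∑ a ∈ s, (p a).toReal * ((g a x).toReal * f x) := by
        refine Finset.sum_congr rfl fun x _ => ?_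
        rw [bind_apply, tsum_eq_sum (s := s) fun a ha => by
            simp [(p.apply_eq_zero_iff a).2 (by simpa [s] using ha)],
          ENNReal.toReal_sum fun a _ =>
            ENNReal.mul_ne_top (p.apply_ne_top a) ((g a).apply_ne_top x),
          Finset.sum_mul]
        simp only [ENNReal.toReal_mul, mul_assoc]
    _ = ∑ a ∈ s, (p a).toReal * ∫ x, f x ∂(g a).toMeasure := by
        rw [Finset.sum_comm]
        refine Finset.sum_congr rfl fun a ha => ?_
        rw [integral_eq_sum_of_support_subset (hgt a ha), Finset.mul_sum]

theorem integral_bind_bind {γ : Type*} [MeasurableSpace γ] [MeasurableSingletonClass γ]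
    {p : PMF α} {q : PMF β} {g : α → β → PMF γ} (hp : p.support.Finite) (hq : q.support.Finite)
    (hg : ∀ a ∈ p.support, ∀ b ∈ q.support, (g a b).support.Finite) (f : γ → ℝ) :
    ∫ x, f x ∂(p.bind fun a => q.bind (g a)).toMeasure =
      ∫ a, ∫ b, ∫ x, f x ∂(g a b).toMeasure ∂q.toMeasure ∂p.toMeasure := by
  rw [integral_bind hp fun a ha => support_bind_finite hq (hg a ha)]
  exact integral_congr_support fun a ha => integral_bind hq (hg a ha) f

set_option linter.deprecated false in
theorem integral_map_bernoulli {q : NNReal} (hq : q ≤ 1) (lo hi : α) (f : α → ℝ) :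
    ∫ x, f x ∂((bernoulli q hq).map fun b => if b then hi else lo).toMeasure =
      (1 - q) * f lo + q * f hi := by
  have hg : Measurable fun b : Bool => if b then hi else lo := measurable_of_countable _
  have hf := integrable_of_support_finite
    (support_map_finite (fun b : Bool => if b then hi else lo) (bernoulli q hq)) f
  rw [← toMeasure_map _ _ hg] at hf ⊢
  rw [integral_map hg.aemeasurable hf.aestronglyMeasurable, integral_eq_sum, Fintype.sum_bool]
  simp only [bernoulli_apply, cond_true, cond_false, if_true, Bool.false_eq_true, if_false,
    ENNReal.coe_toReal, NNReal.coe_sub hq, NNReal.coe_one, smul_eq_mul]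
  ring

end PMF

theorem pmfVar_eq_sub {p : PMF ℝ} (hp : p.support.Finite) :
    pmfVar p = ∫ x, x ^ 2 ∂p.toMeasure - pmfExp p ^ 2 :=
  variance_eq_sub <| (memLp_two_iff_integrable_sq measurable_id.aestronglyMeasurable).2
    (PMF.integrable_of_support_finite hp _)

section IteratedIntegral

variable {μ ν : Measure ℝ} [IsProbabilityMeasure μ] [IsProbabilityMeasure ν]

theorem integral_integral_add (hμ : Integrable (fun a => a) μ) (hν : Integrable (fun b => b) ν) :
    ∫ a, ∫ b, (a + b) ∂ν ∂μ = ∫ a, a ∂μ + ∫ b, b ∂ν := by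
  have inner (a : ℝ) : ∫ b, (a + b) ∂ν = a + ∫ b, b ∂ν := by
    rw [integral_add (integrable_const a) hν, integral_const, probReal_univ, one_smul]
  simp only [inner]
  rw [integral_add hμ (integrable_const _), integral_const, probReal_univ, one_smul]

theorem integral_integral_add_sq_add_mul (c : ℝ) (hμ : Integrable (fun a => a) μ)
    (hμ2 : Integrable (fun a => a ^ 2) μ) (hν : Integrable (fun b => b) ν)
    (hν2 : Integrable (fun b => b ^ 2) ν) :
    ∫ a, ∫ b, ((a + b) ^ 2 + c * a * b) ∂ν ∂μ =
      ∫ a, a ^ 2 ∂μ + ∫ b, b ^ 2 ∂ν + (2 + c) * (∫ a, a ∂μ) * ∫ b, b ∂ν := by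
  have inner (a : ℝ) : ∫ b, ((a + b) ^ 2 + c * a * b) ∂ν =
      a ^ 2 + (2 + c) * (∫ b, b ∂ν) * a + ∫ b, b ^ 2 ∂ν := by
    have h : (fun b => (a + b) ^ 2 + c * a * b) = fun b => a ^ 2 + (2 + c) * a * b + b ^ 2 := by
      ext b; ring
    have hlin : Integrable (fun b => a ^ 2 + (2 + c) * a * b) ν :=
      (integrable_const _).add (hν.const_mul _)
    rw [h, integral_add hlin hν2,
      integral_add (integrable_const _) (hν.const_mul _), integral_const, probReal_univ, one_smul,
      integral_const_mul]
    ring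
  have hquad : Integrable (fun a => a ^ 2 + (2 + c) * (∫ b, b ∂ν) * a) μ :=
    hμ2.add (hμ.const_mul _)
  simp only [inner]
  rw [integral_add hquad (integrable_const _),
    integral_add hμ2 (hμ.const_mul _), integral_const, probReal_univ, one_smul,
    integral_const_mul]
  ring

end IteratedIntegral

section Rounding

variable {δ : ℝ}

theorem rfloor_le (hδ : 0 < δ) {y : ℝ} (hy : 1 ≤ y) : rfloor δ y ≤ y := by
  have hb : 1 < 1 + δ := lt_add_of_pos_right 1 hδ
  calc rfloor δ y = (1 + δ) ^ (rExp δ y : ℝ) := (Real.rpow_natCast _ _).symm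
    _ ≤ (1 + δ) ^ Real.logb (1 + δ) y :=
      Real.rpow_le_rpow_of_exponent_le hb.le (Nat.floor_le (Real.logb_nonneg hb hy))
    _ = y := Real.rpow_logb (by linarith) hb.ne' (by linarith)

theorem lt_one_add_mul_rfloor (hδ : 0 < δ) {y : ℝ} (hy : 0 < y) : y < (1 + δ) * rfloor δ y := by
  have hb : 1 < 1 + δ := lt_add_of_pos_right 1 hδ
  calc y = (1 + δ) ^ Real.logb (1 + δ) y := (Real.rpow_logb (by linarith) hb.ne' hy).symm
    _ < (1 + δ) ^ ((rExp δ y + 1 : ℕ) : ℝ) := by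
      apply Real.rpow_lt_rpow_of_exponent_lt hb
      push_cast
      exact Nat.lt_floor_add_one _
    _ = (1 + δ) * rfloor δ y := by rw [Real.rpow_natCast, pow_succ', rfloor]

theorem pow_le_rfloor (hδ : 0 < δ) {y : ℝ} {n : ℕ} (h : (1 + δ) ^ n ≤ y) :
    (1 + δ) ^ n ≤ rfloor δ y := by
  have hb : 1 < 1 + δ := lt_add_of_pos_right 1 hδ
  have hy : 0 < y := (pow_pos (by linarith) n).trans_le h
  have hn : (n : ℝ) ≤ Real.logb (1 + δ) y := by
    rwa [Real.le_logb_iff_rpow_le hb hy, Real.rpow_natCast]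
  exact pow_le_pow_right₀ hb.le (Nat.le_floor hn)

theorem support_roundPMF_finite (δ y : ℝ) : (roundPMF δ y).support.Finite :=
  PMF.support_map_finite _ _

theorem integral_roundPMF (hδ : 0 < δ) {y : ℝ} (hy : 1 ≤ y) (f : ℝ → ℝ) :
    ∫ x, f x ∂(roundPMF δ y).toMeasure =
      (1 - (y - rfloor δ y) / (δ * rfloor δ y)) * f (rfloor δ y) +
        (y - rfloor δ y) / (δ * rfloor δ y) * f ((1 + δ) * rfloor δ y) := by
  have hL : 0 < rfloor δ y := pow_pos (by linarith) _
  have hθ0 : 0 ≤ (y - rfloor δ y) / (δ * rfloor δ y) :=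
    div_nonneg (by linarith [rfloor_le hδ hy]) (by positivity)
  have hθ1 : (y - rfloor δ y) / (δ * rfloor δ y) ≤ 1 := by
    rw [div_le_one (by positivity)]
    linarith [lt_one_add_mul_rfloor hδ (by linarith : (0 : ℝ) < y)]
  have hprob : ((min (roundUpProb δ y).toNNReal 1 : NNReal) : ℝ) =
      (y - rfloor δ y) / (δ * rfloor δ y) := by
    rw [roundUpProb, ENNReal.ofReal, ENNReal.toNNReal_coe,
      min_eq_left (Real.toNNReal_le_one.2 hθ1), Real.coe_toNNReal _ hθ0]
  rw [roundPMF, PMF.integral_map_bernoulli, hprob, pow_succ', rfloor]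

theorem integral_id_roundPMF (hδ : 0 < δ) {y : ℝ} (hy : 1 ≤ y) :
    ∫ x, x ∂(roundPMF δ y).toMeasure = y := by
  have hL : 0 < rfloor δ y := pow_pos (by linarith) _
  rw [integral_roundPMF hδ hy]
  field_simp
  ring

theorem integral_sq_roundPMF (hδ : 0 < δ) {y : ℝ} (hy : 1 ≤ y) :
    ∫ x, x ^ 2 ∂(roundPMF δ y).toMeasure =
      y ^ 2 + (y - rfloor δ y) * ((1 + δ) * rfloor δ y - y) := by
  have hL : 0 < rfloor δ y := pow_pos (by linarith) _
  rw [integral_roundPMF hδ hy]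
  field_simp
  ring

theorem sub_rfloor_mul_sub_le (hδ : 0 < δ) {a : ℝ} (n : ℕ) (ha : 0 ≤ a) (hab : a ≤ (1 + δ) ^ n) :
    (a + (1 + δ) ^ n - rfloor δ (a + (1 + δ) ^ n)) *
        ((1 + δ) * rfloor δ (a + (1 + δ) ^ n) - (a + (1 + δ) ^ n)) ≤ δ * a * (1 + δ) ^ n := by
  set b := (1 + δ) ^ n
  set y := a + b
  set L := rfloor δ y
  have hb : 1 < 1 + δ := lt_add_of_pos_right 1 hδ
  have hb1 : 1 ≤ b := one_le_pow₀ hb.le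
  have hLy : L ≤ y := rfloor_le hδ (by linarith)
  have hbL : b ≤ L := pow_le_rfloor hδ (by linarith)
  have hn : n ≤ rExp δ y := (pow_le_pow_iff_right₀ hb).1 hbL
  rcases hn.eq_or_lt with hn | hn
  · have hLb : L = b := by simp only [L, rfloor, b, hn]
    rw [hLb]
    nlinarith [sq_nonneg a]
  · have hbL' : (1 + δ) * b ≤ L := by
      rw [← pow_succ']
      exact pow_le_pow_right₀ hb.le hn
    have hδb : δ * b ≤ a := by linarith
    have hL0 : 0 ≤ L := by linarith
    calc (y - L) * ((1 + δ) * L - y) ≤ (δ * L) ^ 2 / 4 := by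
          nlinarith [sq_nonneg ((y - L) - ((1 + δ) * L - y))]
      _ ≤ (δ * (2 * b)) ^ 2 / 4 := by gcongr; linarith
      _ = δ * (δ * b) * b := by ring
      _ ≤ δ * a * b := by gcongr

theorem integral_sq_roundPMF_add_le (hδ : 0 < δ) {a b : ℝ} (ha : ∃ m : ℕ, a = (1 + δ) ^ m)
    (hb : ∃ n : ℕ, b = (1 + δ) ^ n) :
    ∫ x, x ^ 2 ∂(roundPMF δ (a + b)).toMeasure ≤ (a + b) ^ 2 + δ * a * b := by
  obtain ⟨m, rfl⟩ := ha
  obtain ⟨n, rfl⟩ := hb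
  have hpow (k : ℕ) : (1 : ℝ) ≤ (1 + δ) ^ k := one_le_pow₀ (by linarith)
  rw [integral_sq_roundPMF hδ (by linarith [hpow m, hpow n])]
  rcases le_total ((1 + δ) ^ m) ((1 + δ) ^ n) with h | h
  · linarith [sub_rfloor_mul_sub_le hδ n (by linarith [hpow m]) h]
  · have := sub_rfloor_mul_sub_le hδ m (by linarith [hpow n]) h
    rw [add_comm ((1 + δ) ^ n)] at this
    linarith

end Rounding

/-- Let `X1` and `X2` be independent (finitely supported) nonnegative
random variables, each taking values in the set `{(1+δ)^r : r ∈ ℤ≥0}` of integer powers of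
`(1+δ)`, and let `X = Round_δ(X1 + X2)`, the rounding performed conditionally on the value
of `X1 + X2` and independently of everything else (here modelled by the distribution
`p1.bind fun a => p2.bind fun b => roundPMF δ (a + b)` of `X`). Then
`E[X] = E[X1] + E[X2]` and `Var(X) ≤ Var(X1) + Var(X2) + δ·E[X1]·E[X2]`. -/
theorem round_sum_exp_var (δ : ℝ) (hδ : 0 < δ) (p1 p2 : PMF ℝ)
    (hfin1 : p1.support.Finite) (hfin2 : p2.support.Finite)
    (hpow1 : ∀ x ∈ p1.support, ∃ r : ℕ, x = (1 + δ) ^ r)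
    (hpow2 : ∀ x ∈ p2.support, ∃ r : ℕ, x = (1 + δ) ^ r) :
    pmfExp (p1.bind fun a => p2.bind fun b => roundPMF δ (a + b)) =
      pmfExp p1 + pmfExp p2 ∧
    pmfVar (p1.bind fun a => p2.bind fun b => roundPMF δ (a + b)) ≤
      pmfVar p1 + pmfVar p2 + δ * pmfExp p1 * pmfExp p2 := by
  have one_le (x : ℝ) (hx : ∃ r : ℕ, x = (1 + δ) ^ r) : 1 ≤ x := by
    obtain ⟨r, rfl⟩ := hx
    exact one_le_pow₀ (by linarith)
  have hround (a b : ℝ) : (roundPMF δ (a + b)).support.Finite := support_roundPMF_finite δ (a + b)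
  have hX := PMF.integral_bind_bind hfin1 hfin2 fun a _ b _ => hround a b
  have hexp : pmfExp (p1.bind fun a => p2.bind fun b => roundPMF δ (a + b)) =
      pmfExp p1 + pmfExp p2 := by
    rw [pmfExp, hX, pmfExp, pmfExp, ← integral_integral_add
      (PMF.integrable_of_support_finite hfin1 _) (PMF.integrable_of_support_finite hfin2 _)]
    refine PMF.integral_congr_support fun a ha => PMF.integral_congr_support fun b hb => ?_
    exact integral_id_roundPMF hδ (by linarith [one_le a (hpow1 a ha), one_le b (hpow2 b hb)])
  have hsq : ∫ x, x ^ 2 ∂(p1.bind fun a => p2.bind fun b => roundPMF δ (a + b)).toMeasure ≤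
      ∫ a, a ^ 2 ∂p1.toMeasure + ∫ b, b ^ 2 ∂p2.toMeasure + (2 + δ) * pmfExp p1 * pmfExp p2 := by
    rw [hX, pmfExp, pmfExp, ← integral_integral_add_sq_add_mul δ
      (PMF.integrable_of_support_finite hfin1 _) (PMF.integrable_of_support_finite hfin1 _)
      (PMF.integrable_of_support_finite hfin2 _) (PMF.integrable_of_support_finite hfin2 _)]
    refine PMF.integral_mono_support hfin1 fun a ha =>
      PMF.integral_mono_support hfin2 fun b hb => ?_
    exact integral_sq_roundPMF_add_le hδ (hpow1 a ha) (hpow2 b hb)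
  refine ⟨hexp, ?_⟩
  rw [pmfVar_eq_sub (PMF.support_bind_finite hfin1 fun a _ =>
      PMF.support_bind_finite hfin2 fun b _ => hround a b),
    pmfVar_eq_sub hfin1, pmfVar_eq_sub hfin2, hexp]
  linear_combination hsq
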